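/- Let c be an immersed closed curve and define the squared scale E(c) := (1/2)∫ |c|² ds. Then for every direction h, the function t ↦ E(c + t·h) is differentiable at t = 0 (note c + t·h is immersed for t near 0), and (d/dt)|_{t=0} E(c + t·h) = ∫⟨ c − ⟨c, D_s c⟩·D_s c − (1/2)|c|²·D_s²c, h⟩ ds. That is, the L²(ds)-gradient of E at c equals (1 − pr_c)c − (1/2)|c|²·D_s²c, where pr_c h := ⟨h, D_s c⟩ D_s c. -/

import Mathlib

noncomputable section

open Real
open scoped ContDiff

/-- Points of `ℝ³`. -/
abbrev V3 := Fin 3 → ℝ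

/-- Euclidean inner product on `ℝ³`. -/
def dot3 (u v : V3) : ℝ := u 0 * v 0 + u 1 * v 1 + u 2 * v 2

/-- Cross product on `ℝ³`. -/
def cross3 (u v : V3) : V3 :=
  ![u 1 * v 2 - u 2 * v 1, u 2 * v 0 - u 0 * v 2, u 0 * v 1 - u 1 * v 0]

/-- Euclidean norm on `ℝ³`. -/
def norm3 (u : V3) : ℝ := Real.sqrt (dot3 u u)

/-- A closed curve: a smooth `2π`-periodic map `ℝ → ℝ³`. -/
def IsClosedCurve (c : ℝ → V3) : Prop :=
  ContDiff ℝ (⊤ : ℕ∞) c ∧ ∀ θ, c (θ + 2 * π) = c θ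

/-- An immersed closed curve: `c'(θ) ≠ 0` for all `θ`. -/
def IsImmersed (c : ℝ → V3) : Prop :=
  IsClosedCurve c ∧ ∀ θ, deriv c θ ≠ 0

/-- A direction (tangent vector): a smooth `2π`-periodic map `ℝ → ℝ³`. -/
def IsDirection (h : ℝ → V3) : Prop :=
  ContDiff ℝ (⊤ : ℕ∞) h ∧ ∀ θ, h (θ + 2 * π) = h θ

/-- Arc-length derivative along `c`: `D_s h = h'/|c'|`. -/
def Ds (c h : ℝ → V3) : ℝ → V3 := fun θ => (norm3 (deriv c θ))⁻¹ • deriv h θ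

/-- The unit tangent `T = D_s c = c'/|c'|`. -/
def unitT (c : ℝ → V3) : ℝ → V3 := Ds c c

/-- `D_s² c = D_s (D_s c)`. -/
def Ds2c (c : ℝ → V3) : ℝ → V3 := Ds c (Ds c c)

/-- Arc-length integral `∫ f ds = ∫₀^{2π} f(θ) |c'(θ)| dθ`. -/
def arcInt (c : ℝ → V3) (f : ℝ → ℝ) : ℝ :=
  ∫ θ in (0:ℝ)..(2 * π), f θ * norm3 (deriv c θ)

/-- `L²(ds)` pairing `⟨f,g⟩_{L²} = ∫ ⟨f,g⟩ ds`. -/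
def L2 (c f g : ℝ → V3) : ℝ := arcInt c (fun θ => dot3 (f θ) (g θ))

/-- Length `ℓ_c = ∫₀^{2π} |c'(θ)| dθ`. -/
def curveLen (c : ℝ → V3) : ℝ := ∫ θ in (0:ℝ)..(2 * π), norm3 (deriv c θ)

/-- The Liouville one-form for `L = id`: `Θ(c,h) = ∫₀^{2π} ⟨c × c', h⟩ dθ`. -/
def Theta (c h : ℝ → V3) : ℝ :=
  ∫ θ in (0:ℝ)..(2 * π), dot3 (cross3 (c θ) (deriv c θ)) (h θ)

/-- The squared curvature `κ² = |D_s² c|²`. -/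
def kappaSq (c : ℝ → V3) (θ : ℝ) : ℝ := dot3 (Ds2c c θ) (Ds2c c θ)

/-- The squared scale `E(c) = (1/2)∫ |c|² ds`. -/
def Esq (c : ℝ → V3) : ℝ := (1/2) * arcInt c (fun θ => dot3 (c θ) (c θ))

-- Auxiliary lemmas
lemma dot3_comm (u v : V3) : dot3 u v = dot3 v u := by unfold dot3; ring
lemma dot3_smul_left (r : ℝ) (u v : V3) : dot3 (r • u) v = r * dot3 u v := by
  simp [dot3]; ring
lemma dot3_smul_right (r : ℝ) (u v : V3) : dot3 u (r • v) = r * dot3 u v := by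
  simp [dot3]; ring
lemma dot3_add_left (u v w : V3) : dot3 (u + v) w = dot3 u w + dot3 v w := by
  simp [dot3]; ring
lemma dot3_add_right (u v w : V3) : dot3 u (v + w) = dot3 u v + dot3 u w := by
  simp [dot3]; ring
lemma dot3_sub_left (u v w : V3) : dot3 (u - v) w = dot3 u w - dot3 v w := by
  simp [dot3]; ring
lemma dot3_self_pos {u : V3} (h : u ≠ 0) : 0 < dot3 u u := by
  obtain ⟨i, hi⟩ : ∃ i, u i ≠ 0 := by
    by_contra hcon; push_neg at hcon; exact h (funext fun i => hcon i)
  have h0 := mul_self_nonneg (u 0)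
  have h1 := mul_self_nonneg (u 1)
  have h2 := mul_self_nonneg (u 2)
  unfold dot3
  fin_cases i <;>
    first
      | nlinarith [mul_self_pos.mpr (show u 0 ≠ 0 from hi)]
      | nlinarith [mul_self_pos.mpr (show u 1 ≠ 0 from hi)]
      | nlinarith [mul_self_pos.mpr (show u 2 ≠ 0 from hi)]
lemma norm3_pos {u : V3} (h : u ≠ 0) : 0 < norm3 u := Real.sqrt_pos.mpr (dot3_self_pos h)
lemma norm3_nonneg (u : V3) : 0 ≤ norm3 u := Real.sqrt_nonneg _
lemma hasDerivAt_dot3 {f g : ℝ → V3} {f' g' : V3} {x : ℝ}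
    (hf : HasDerivAt f f' x) (hg : HasDerivAt g g' x) :
    HasDerivAt (fun t => dot3 (f t) (g t)) (dot3 f' (g x) + dot3 (f x) g') x := by
  have hfi := hasDerivAt_pi.mp hf
  have hgi := hasDerivAt_pi.mp hg
  have := (((hfi 0).mul (hgi 0)).add ((hfi 1).mul (hgi 1))).add ((hfi 2).mul (hgi 2))
  have e : dot3 f' (g x) + dot3 (f x) g' = f' 0 * g x 0 + f x 0 * g' 0 + (f' 1 * g x 1 + f x 1 * g' 1)
      + (f' 2 * g x 2 + f x 2 * g' 2) := by unfold dot3; ring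
  rw [e]; exact this
lemma continuous_dot3 {α : Type*} [TopologicalSpace α] {f g : α → V3}
    (hf : Continuous f) (hg : Continuous g) : Continuous fun x => dot3 (f x) (g x) := by
  unfold dot3; fun_prop
lemma continuous_norm3 {α : Type*} [TopologicalSpace α] {f : α → V3}
    (hf : Continuous f) : Continuous fun x => norm3 (f x) := by
  unfold norm3; exact Real.continuous_sqrt.comp (continuous_dot3 hf hf)
def toE : V3 ≃ₗ[ℝ] EuclideanSpace ℝ (Fin 3) := (WithLp.linearEquiv 2 ℝ (Fin 3 → ℝ)).symm
lemma norm3_eq (u : V3) : norm3 u = ‖toE u‖ := by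
  rw [EuclideanSpace.norm_eq]
  unfold norm3 dot3
  congr 1
  rw [Fin.sum_univ_three]
  simp [toE, Real.norm_eq_abs, sq_abs]
  ring
lemma norm3_add_le (u v : V3) : norm3 (u + v) ≤ norm3 u + norm3 v := by
  rw [norm3_eq, norm3_eq, norm3_eq, map_add]; exact norm_add_le _ _
lemma norm3_smul (t : ℝ) (u : V3) : norm3 (t • u) = |t| * norm3 u := by
  rw [norm3_eq, norm3_eq, map_smul, norm_smul, Real.norm_eq_abs]
lemma norm3_sub_le (u v : V3) : norm3 u - norm3 v ≤ norm3 (u + v) := by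
  have := norm3_add_le (u + v) ((-1 : ℝ) • v)
  have h2 : u + v + (-1 : ℝ) • v = u := by module
  rw [h2, norm3_smul] at this
  simp at this
  linarith

/-- The integrand as a function of the parameter `t`. -/
def Ffun (c h : ℝ → V3) (t θ : ℝ) : ℝ :=
  (1/2) * (dot3 (c θ + t • h θ) (c θ + t • h θ) * norm3 (deriv c θ + t • deriv h θ))

/-- The `t`-derivative of the integrand. -/
def F'fun (c h : ℝ → V3) (t θ : ℝ) : ℝ :=
  dot3 (c θ + t • h θ) (h θ) * norm3 (deriv c θ + t • deriv h θ)
    + 1/2 * dot3 (c θ + t • h θ) (c θ + t • h θ) *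
        (dot3 (deriv c θ + t • deriv h θ) (deriv h θ) / norm3 (deriv c θ + t • deriv h θ))

lemma Besq (c h : ℝ → V3) (hcd : Differentiable ℝ c) (hhd : Differentiable ℝ h) :
    (fun t : ℝ => Esq (fun θ => c θ + t • h θ)) = fun t => ∫ θ in (0:ℝ)..(2*π), Ffun c h t θ := by
  funext t
  unfold Esq arcInt Ffun
  rw [← intervalIntegral.integral_const_mul]
  apply intervalIntegral.integral_congr
  intro θ _
  have hd : deriv (fun θ => c θ + t • h θ) θ = deriv c θ + t • deriv h θ :=
    (((hcd θ).hasDerivAt).add (((hhd θ).hasDerivAt).const_smul t)).deriv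
  simp only []
  rw [hd]

set_option maxHeartbeats 2000000 in
lemma Cval (c h : ℝ → V3) (hc : IsImmersed c) (hh : IsDirection h) :
    (∫ θ in (0:ℝ)..(2*π), F'fun c h 0 θ)
      = arcInt c (fun θ => dot3
        (c θ - dot3 (c θ) (unitT c θ) • unitT c θ
          - ((1/2) * dot3 (c θ) (c θ)) • Ds2c c θ) (h θ)) := by
  obtain ⟨⟨hcsm, hcper⟩, hcim⟩ := hc
  obtain ⟨hhsm, hhper⟩ := hh
  have hcd : Differentiable ℝ c := hcsm.differentiable (by simp)
  have hhd : Differentiable ℝ h := hhsm.differentiable (by simp)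
  have hcinf : ContDiff ℝ ∞ c := hcsm.of_le (by simp)
  have hhinf : ContDiff ℝ ∞ h := hhsm.of_le (by simp)
  have hpinf : ContDiff ℝ ∞ (deriv c) := (contDiff_infty_iff_deriv.mp hcinf).2
  have hpd : Differentiable ℝ (deriv c) := hpinf.differentiable (by simp)
  have hpcont : Continuous (deriv c) := hpd.continuous
  have hqcont : Continuous (deriv h) := ((contDiff_infty_iff_deriv.mp hhinf).2).continuous
  have hp2cont : Continuous (deriv (deriv c)) := ((contDiff_infty_iff_deriv.mp hpinf).2).continuous
  set p : ℝ → V3 := deriv c with hp_def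
  set q : ℝ → V3 := deriv h with hq_def
  set p2 : ℝ → V3 := deriv (deriv c) with hp2_def
  set n : ℝ → ℝ := fun θ => norm3 (p θ) with hn_def
  have hnpos : ∀ θ, 0 < n θ := fun θ => norm3_pos (hcim θ)
  have hnne : ∀ θ, n θ ≠ 0 := fun θ => (hnpos θ).ne'
  have hncont : Continuous n := continuous_norm3 hpcont
  -- derivative of n
  set n' : ℝ → ℝ := fun θ => dot3 (p θ) (p2 θ) / n θ with hn'_def
  have hn : ∀ θ, HasDerivAt n (n' θ) θ := by
    intro θ
    have hB := hasDerivAt_dot3 ((hpd θ).hasDerivAt) ((hpd θ).hasDerivAt)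
    have hBne : dot3 (p θ) (p θ) ≠ 0 := (dot3_self_pos (hcim θ)).ne'
    have hs := (Real.hasDerivAt_sqrt hBne).comp θ hB
    refine hs.congr_deriv ?_
    have : Real.sqrt (dot3 (p θ) (p θ)) = n θ := rfl
    rw [this, hn'_def]
    rw [dot3_comm (p2 θ) (p θ)]
    field_simp
    ring
  -- derivative of unit tangent
  set T' : ℝ → V3 := fun θ => (n θ)⁻¹ • p2 θ + (-(n' θ) / n θ ^ 2) • p θ with hT'_def
  have hT : ∀ θ, HasDerivAt (unitT c) (T' θ) θ := by
    intro θ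
    have := ((hn θ).inv (hnne θ)).smul ((hpd θ).hasDerivAt)
    exact this
  have hDs2 : ∀ θ, Ds2c c θ = (n θ)⁻¹ • T' θ := by
    intro θ
    show (norm3 (deriv c θ))⁻¹ • deriv (Ds c c) θ = _
    rw [show Ds c c = unitT c from rfl, (hT θ).deriv]
  have hunit : ∀ θ, unitT c θ = (n θ)⁻¹ • p θ := fun θ => rfl
  -- the boundary function g and its derivative G
  set g : ℝ → ℝ := fun θ => 1/2 * dot3 (c θ) (c θ) * dot3 (unitT c θ) (h θ) with hg_def
  set G : ℝ → ℝ := fun θ =>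
      1/2 * (dot3 (p θ) (c θ) + dot3 (c θ) (p θ)) * dot3 (unitT c θ) (h θ)
        + 1/2 * dot3 (c θ) (c θ) * (dot3 (T' θ) (h θ) + dot3 (unitT c θ) (q θ)) with hG_def
  have hg : ∀ θ, HasDerivAt g (G θ) θ := by
    intro θ
    exact ((hasDerivAt_dot3 ((hcd θ).hasDerivAt) ((hcd θ).hasDerivAt)).const_mul (1/2)).mul
      (hasDerivAt_dot3 (hT θ) ((hhd θ).hasDerivAt))
  -- continuity facts
  have hTcont : Continuous (unitT c) := by
    have : Continuous fun θ => (n θ)⁻¹ • p θ := (hncont.inv₀ hnne).smul hpcont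
    exact this
  have hn'cont : Continuous n' := (continuous_dot3 hpcont hp2cont).div hncont hnne
  have hT'cont : Continuous T' := by
    apply Continuous.add
    · exact (hncont.inv₀ hnne).smul hp2cont
    · exact (hn'cont.neg.div (hncont.pow 2) (fun θ => pow_ne_zero 2 (hnne θ))).smul hpcont
  have hhc : Continuous h := hhd.continuous
  have hcc : Continuous c := hcd.continuous
  have hGcont : Continuous G := by
    apply Continuous.add
    · exact (continuous_const.mul ((continuous_dot3 hpcont hcc).add
        (continuous_dot3 hcc hpcont))).mul (continuous_dot3 hTcont hhc)
    · exact (continuous_const.mul (continuous_dot3 hcc hcc)).mul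
        ((continuous_dot3 hT'cont hhc).add (continuous_dot3 hTcont hqcont))
  -- F' 0 is continuous
  have hF'0eq : F'fun c h 0 = fun θ =>
      dot3 (c θ) (h θ) * n θ + 1/2 * dot3 (c θ) (c θ) * (dot3 (p θ) (q θ) / n θ) := by
    funext θ
    simp [F'fun]
    rfl
  have hF'0cont : Continuous (F'fun c h 0) := by
    rw [hF'0eq]
    exact ((continuous_dot3 hcc hhc).mul hncont).add
      ((continuous_const.mul (continuous_dot3 hcc hcc)).mul
        ((continuous_dot3 hpcont hqcont).div hncont hnne))
  -- the key pointwise identity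
  have hkey : ∀ θ, (fun θ => dot3
        (c θ - dot3 (c θ) (unitT c θ) • unitT c θ
          - ((1/2) * dot3 (c θ) (c θ)) • Ds2c c θ) (h θ) * norm3 (deriv c θ)) θ
      = F'fun c h 0 θ - G θ := by
    intro θ
    have hnn : norm3 (deriv c θ) = n θ := rfl
    simp only [hDs2 θ, hunit θ, hF'0eq, hG_def, hnn, hT'_def]
    simp only [dot3_sub_left, dot3_add_left, dot3_smul_left, dot3_smul_right, hn'_def]
    rw [dot3_comm (p θ) (c θ)]
    have h5 : n θ ^ 5 * ((n θ)⁻¹) ^ 5 = 1 := by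
      rw [← mul_pow, mul_inv_cancel₀ (hnne θ), one_pow]
    field_simp [hnne θ]
    ring
  -- ∫ G = 0 by periodicity
  have hper_p : ∀ x, p (x + 2*π) = p x := by
    intro x
    have h1 : (fun θ => c (θ + 2*π)) = c := funext hcper
    calc p (x + 2*π) = deriv (fun θ => c (θ + 2*π)) x := by rw [deriv_comp_add_const]
      _ = p x := by rw [h1]
  have hc2 : c (2*π) = c 0 := by simpa using hcper 0
  have hh2 : h (2*π) = h 0 := by simpa using hhper 0
  have hp2π : p (2*π) = p 0 := by simpa using hper_p 0
  have hT2 : unitT c (2*π) = unitT c 0 := by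
    rw [hunit, hunit, hn_def]
    simp only [hp2π]
  have hGint : (∫ θ in (0:ℝ)..(2*π), G θ) = 0 := by
    rw [intervalIntegral.integral_eq_sub_of_hasDerivAt (fun θ _ => hg θ)
      (hGcont.intervalIntegrable _ _)]
    rw [hg_def]
    simp only [hc2, hh2, hT2, sub_self]
  -- assemble
  unfold arcInt
  rw [intervalIntegral.integral_congr (g := fun θ => F'fun c h 0 θ - G θ)
    (fun θ _ => hkey θ)]
  rw [intervalIntegral.integral_sub (hF'0cont.intervalIntegrable _ _)
    (hGcont.intervalIntegrable _ _), hGint, sub_zero]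

set_option maxHeartbeats 1000000 in
lemma Aderiv (c h : ℝ → V3) (hc : IsImmersed c) (hh : IsDirection h) :
    HasDerivAt (fun t : ℝ => ∫ θ in (0:ℝ)..(2*π), Ffun c h t θ)
      (∫ θ in (0:ℝ)..(2*π), F'fun c h 0 θ) 0 := by
  obtain ⟨⟨hcsm, hcper⟩, hcim⟩ := hc
  obtain ⟨hhsm, hhper⟩ := hh
  have hcd : Differentiable ℝ c := hcsm.differentiable (by simp)
  have hhd : Differentiable ℝ h := hhsm.differentiable (by simp)
  have hcc : Continuous c := hcd.continuous
  have hhc : Continuous h := hhd.continuous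
  have hcinf : ContDiff ℝ ∞ c := hcsm.of_le (by simp)
  have hhinf : ContDiff ℝ ∞ h := hhsm.of_le (by simp)
  have hpcont : Continuous (deriv c) := ((contDiff_infty_iff_deriv.mp hcinf).2).continuous
  have hqcont : Continuous (deriv h) := ((contDiff_infty_iff_deriv.mp hhinf).2).continuous
  set p : ℝ → V3 := deriv c with hp_def
  set q : ℝ → V3 := deriv h with hq_def
  have hnpos : ∀ θ, (0:ℝ) < norm3 (p θ) := fun θ => norm3_pos (hcim θ)
  have hncont : Continuous fun θ => norm3 (p θ) := continuous_norm3 hpcont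
  have h2π : (0:ℝ) ≤ 2*π := by positivity
  obtain ⟨θ₀, hθ₀mem, hθ₀min⟩ :=
    isCompact_Icc.exists_isMinOn (Set.nonempty_Icc.mpr h2π) hncont.continuousOn
  set m := norm3 (p θ₀) with hm_def
  have hmpos : 0 < m := hnpos θ₀
  have hmle : ∀ θ ∈ Set.Icc (0:ℝ) (2*π), m ≤ norm3 (p θ) := fun θ hθ => hθ₀min hθ
  obtain ⟨M, hM⟩ := isCompact_Icc.exists_bound_of_continuousOn
    ((continuous_norm3 hqcont).continuousOn (s := Set.Icc (0:ℝ) (2*π)))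
  have hMq : ∀ θ ∈ Set.Icc (0:ℝ) (2*π), norm3 (q θ) ≤ M := fun θ hθ =>
    (le_abs_self _).trans (by simpa [Real.norm_eq_abs] using hM θ hθ)
  have hM0 : 0 ≤ M := le_trans (norm3_nonneg (q 0)) (hMq 0 (Set.mem_Icc.mpr ⟨le_refl 0, h2π⟩))
  set ε := m / (2*(M+1)) with hε_def
  have hεpos : 0 < ε := by positivity
  have hlow : ∀ θ ∈ Set.Icc (0:ℝ) (2*π), ∀ t : ℝ, |t| ≤ ε → m/2 ≤ norm3 (p θ + t • q θ) := by
    intro θ hθ t ht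
    have h1 : norm3 (p θ) - norm3 (t • q θ) ≤ norm3 (p θ + t • q θ) := norm3_sub_le _ _
    rw [norm3_smul] at h1
    have h2 : |t| * norm3 (q θ) ≤ ε * M :=
      mul_le_mul ht (hMq θ hθ) (norm3_nonneg _) hεpos.le
    have h3 : ε * (2*(M+1)) = m := by rw [hε_def]; field_simp
    have h4 : ε * M ≤ m/2 := by nlinarith
    have := hmle θ hθ
    linarith
  have hlowpos : ∀ θ ∈ Set.Icc (0:ℝ) (2*π), ∀ t : ℝ, |t| ≤ ε →
      norm3 (p θ + t • q θ) ≠ 0 := by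
    intro θ hθ t ht
    exact (lt_of_lt_of_le (half_pos hmpos) (hlow θ hθ t ht)).ne'
  have hucont : Continuous (fun z : ℝ × ℝ => c z.2 + z.1 • h z.2) :=
    (hcc.comp continuous_snd).add (continuous_fst.smul (hhc.comp continuous_snd))
  have hwcont : Continuous (fun z : ℝ × ℝ => p z.2 + z.1 • q z.2) :=
    (hpcont.comp continuous_snd).add (continuous_fst.smul (hqcont.comp continuous_snd))
  set K : Set (ℝ × ℝ) := Set.Icc (-ε) ε ×ˢ Set.Icc (0:ℝ) (2*π) with hK_def
  have hKmem : ∀ z ∈ K, norm3 (p z.2 + z.1 • q z.2) ≠ 0 := by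
    intro z hz
    exact hlowpos z.2 hz.2 z.1 (abs_le.mpr ⟨hz.1.1, hz.1.2⟩)
  have hΦ : ContinuousOn (fun z : ℝ × ℝ => F'fun c h z.1 z.2) K := by
    unfold F'fun
    apply ContinuousOn.add
    · exact ((continuous_dot3 hucont (hhc.comp continuous_snd)).mul
        (continuous_norm3 hwcont)).continuousOn
    · apply ContinuousOn.mul
      · exact (continuous_const.mul (continuous_dot3 hucont hucont)).continuousOn
      · exact ContinuousOn.div
          ((continuous_dot3 hwcont (hqcont.comp continuous_snd)).continuousOn)
          ((continuous_norm3 hwcont).continuousOn) hKmem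
  obtain ⟨C, hC⟩ := (isCompact_Icc.prod isCompact_Icc).exists_bound_of_continuousOn hΦ
  have hFcont : ∀ t : ℝ, Continuous (Ffun c h t) := by
    intro t
    unfold Ffun
    exact continuous_const.mul
      ((continuous_dot3 (hcc.add (hhc.const_smul t)) (hcc.add (hhc.const_smul t))).mul
        (continuous_norm3 (hpcont.add (hqcont.const_smul t))))
  have huIoc : Set.uIoc (0:ℝ) (2*π) ⊆ Set.Icc (0:ℝ) (2*π) := by
    rw [Set.uIoc_of_le h2π]; exact Set.Ioc_subset_Icc_self
  have hF'0eq : F'fun c h 0 = fun θ =>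
      dot3 (c θ) (h θ) * norm3 (p θ)
        + 1/2 * dot3 (c θ) (c θ) * (dot3 (p θ) (q θ) / norm3 (p θ)) := by
    funext θ
    simp [F'fun]
    rfl
  have hF'0cont : Continuous (F'fun c h 0) := by
    rw [hF'0eq]
    exact ((continuous_dot3 hcc hhc).mul hncont).add
      ((continuous_const.mul (continuous_dot3 hcc hcc)).mul
        ((continuous_dot3 hpcont hqcont).div hncont (fun θ => (hnpos θ).ne')))
  have main := intervalIntegral.hasDerivAt_integral_of_dominated_loc_of_deriv_le
    (F := Ffun c h) (F' := F'fun c h) (x₀ := (0:ℝ)) (a := 0) (b := 2*π)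
    (bound := fun _ => C) (μ := MeasureTheory.volume) (Metric.ball_mem_nhds 0 hεpos)
    (Filter.Eventually.of_forall (fun t => (hFcont t).aestronglyMeasurable))
    ((hFcont 0).intervalIntegrable _ _)
    hF'0cont.aestronglyMeasurable
    ?bnd
    (intervalIntegrable_const)
    ?diff
  · exact main.2
  case bnd =>
    apply Filter.Eventually.of_forall
    intro θ hθ t ht
    have hθ' : θ ∈ Set.Icc (0:ℝ) (2*π) := huIoc hθ
    have ht' : t ∈ Set.Icc (-ε) ε := by
      rw [Metric.mem_ball, Real.dist_eq, sub_zero] at ht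
      exact Set.mem_Icc.mpr (abs_le.mp ht.le)
    exact hC (t, θ) (Set.mem_prod.mpr ⟨ht', hθ'⟩)
  case diff =>
    apply Filter.Eventually.of_forall
    intro θ hθ t ht
    have hθ' : θ ∈ Set.Icc (0:ℝ) (2*π) := huIoc hθ
    have ht' : |t| ≤ ε := by
      rw [Metric.mem_ball, Real.dist_eq, sub_zero] at ht
      exact ht.le
    have hNne : norm3 (p θ + t • q θ) ≠ 0 := hlowpos θ hθ' t ht'
    have hBne : dot3 (p θ + t • q θ) (p θ + t • q θ) ≠ 0 := by
      intro h0
      exact hNne (by simp [norm3, h0])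
    have hu : HasDerivAt (fun s : ℝ => c θ + s • h θ) (h θ) t := by
      simpa using (((hasDerivAt_id t).smul_const (h θ)).const_add (c θ))
    have hw : HasDerivAt (fun s : ℝ => p θ + s • q θ) (q θ) t := by
      simpa using (((hasDerivAt_id t).smul_const (q θ)).const_add (p θ))
    have hA := hasDerivAt_dot3 hu hu
    have hB := hasDerivAt_dot3 hw hw
    have hN : HasDerivAt (fun s => norm3 (p θ + s • q θ))
        ((1 / (2 * Real.sqrt (dot3 (p θ + t • q θ) (p θ + t • q θ)))) *
          (dot3 (q θ) (p θ + t • q θ) + dot3 (p θ + t • q θ) (q θ))) t :=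
      (Real.hasDerivAt_sqrt hBne).comp t hB
    have total := (hA.mul hN).const_mul (1/2 : ℝ)
    show HasDerivAt (fun s => (1/2 : ℝ) *
        (dot3 (c θ + s • h θ) (c θ + s • h θ) * norm3 (p θ + s • q θ))) (F'fun c h t θ) t
    refine total.congr_deriv ?_
    have hsq : Real.sqrt (dot3 (p θ + t • q θ) (p θ + t • q θ)) = norm3 (p θ + t • q θ) := rfl
    rw [hsq]
    unfold F'fun
    rw [← hp_def, ← hq_def]
    rw [dot3_comm (h θ) (c θ + t • h θ), dot3_comm (q θ) (p θ + t • q θ)]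
    field_simp
    ring

/-- the `L²(ds)`-gradient of the squared scale `E` at `c` is
`(1 − pr_c)c − (1/2)|c|² D_s²c`. -/
theorem squared_scale_gradient (c h : ℝ → V3) (hc : IsImmersed c) (hh : IsDirection h) :
    HasDerivAt (fun t : ℝ => Esq (fun θ => c θ + t • h θ))
      (arcInt c (fun θ => dot3
        (c θ - dot3 (c θ) (unitT c θ) • unitT c θ
          - ((1/2) * dot3 (c θ) (c θ)) • Ds2c c θ) (h θ))) 0 := by
  rw [Besq c h (hc.1.1.differentiable (by simp)) (hh.1.differentiable (by simp)),
    ← Cval c h hc hh]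
  exact Aderiv c h hc hh
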